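/- Let δ=δ_1/(Λ'(γ)γ)+δ_2 with δ_1,δ_2>0 sufficiently small, let ε=δ^{1/4}, and let t_1^{(N)}=(1/(Λ'(γ)γ)−ε)·log N. Then for every x∈ℝ, P( max_{i≤N} sup_{0≤k<t_1^{(N)}} ∑_{j=1}^k (S_i(j)−A(j)) > (1/γ)·log N + x·√(log N) ) → 0 as N→∞. -/

import Mathlib

open MeasureTheory ProbabilityTheory Filter Real Topology


section Aux

private lemma real_iSup_false {p : Prop} (hp : ¬p) (f : p → ℝ) : (⨆ h : p, f h) = 0 := by
  haveI : IsEmpty p := ⟨hp⟩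
  exact Real.iSup_of_isEmpty _

private lemma real_iSup_true {p : Prop} (hp : p) (a : ℝ) : (⨆ _ : p, a) = a := by
  haveI : Nonempty p := ⟨hp⟩
  exact ciSup_const

private lemma iIndepFun_precomp {Ω ι κ : Type*} [MeasurableSpace Ω] {μ : Measure Ω}
    {f : ι → Ω → ℝ} (h : iIndepFun f μ)
    {u : κ → ι} (hu : Function.Injective u) :
    iIndepFun (fun k => f (u k)) μ := by
  classical
  rw [iIndepFun_iff_measure_inter_preimage_eq_mul] at h ⊢
  intro S sets Hmeas
  have hinj : Set.InjOn u S := hu.injOn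
  set sets' : ι → Set ℝ := fun i => ⋂ k ∈ S.filter (fun k => u k = i), sets k with hsets'
  have hkey : ∀ k ∈ S, sets' (u k) = sets k := by
    intro k hk
    have : S.filter (fun k' => u k' = u k) = {k} := by
      ext k'
      simp only [Finset.mem_filter, Finset.mem_singleton]
      constructor
      · rintro ⟨-, h2⟩; exact hu h2
      · rintro rfl; exact ⟨hk, rfl⟩
    show (⋂ k' ∈ S.filter (fun k' => u k' = u k), sets k') = sets k
    rw [this]
    simp
  have h1 : (⋂ k ∈ S, (fun ω => f (u k) ω) ⁻¹' sets k) = ⋂ i ∈ S.image u, f i ⁻¹' sets' i := by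
    rw [Finset.set_biInter_finset_image]
    apply Set.iInter₂_congr
    intro k hk
    rw [hkey k hk]
  have h2 : ∀ i ∈ S.image u, MeasurableSet (sets' i) := by
    intro i _
    apply Finset.measurableSet_biInter
    intro k hk
    exact Hmeas k (Finset.mem_filter.mp hk).1
  rw [h1, h (S.image u) h2, Finset.prod_image hinj]
  exact Finset.prod_congr rfl fun k hk => by rw [hkey k hk]

private lemma exp_sub_one_le' (t : ℝ) : Real.exp t - 1 ≤ t * Real.exp t := by
  have h0 : ((-t) + 1) * Real.exp t ≤ Real.exp (-t) * Real.exp t :=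
    mul_le_mul_of_nonneg_right (Real.add_one_le_exp _) (Real.exp_pos _).le
  rw [← Real.exp_add] at h0
  simp only [neg_add_cancel, Real.exp_zero] at h0
  nlinarith

private lemma exists_small_mgf {Ω : Type*} [MeasureSpace Ω] [IsProbabilityMeasure (ℙ : Measure Ω)]
    (Y : Ω → ℝ) (hYm : Measurable Y) (hYint : Integrable Y ℙ) (B : ℝ)
    (hYB : ∀ ω, Y ω ≤ B) (hY0 : ∫ ω, Y ω ∂ℙ = 0) {ρ : ℝ} (hρ : 0 < ρ) :
    ∃ φ : ℝ, 0 < φ ∧ Integrable (fun ω => Real.exp (φ * Y ω)) ℙ ∧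
      mgf Y ℙ φ ≤ Real.exp (φ * ρ) := by
  have hint : ∀ φ : ℝ, 0 ≤ φ → Integrable (fun ω => Real.exp (φ * Y ω)) ℙ := by
    intro φ hφ
    refine Integrable.mono' (integrable_const (Real.exp (φ * max B 0))) ?_ ?_
    · exact ((hYm.const_mul φ).exp).aestronglyMeasurable
    · filter_upwards with ω
      rw [Real.norm_eq_abs, abs_of_pos (Real.exp_pos _)]
      apply Real.exp_le_exp.mpr
      have h1 : Y ω ≤ max B 0 := le_trans (hYB ω) (le_max_left _ _)
      nlinarith
  have Hm : Tendsto (fun φ : ℝ => ∫ ω, (Real.exp (φ * Y ω) - 1) / φ ∂ℙ)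
      (𝓝[>] (0:ℝ)) (𝓝 (∫ ω, Y ω ∂ℙ)) := by
    apply MeasureTheory.tendsto_integral_filter_of_dominated_convergence
      (bound := fun ω => |Y ω| * Real.exp (max B 0))
    · filter_upwards with φ
      exact (((hYm.const_mul φ).exp.sub measurable_const).div_const φ).aestronglyMeasurable
    · have hmem : Set.Ioc (0:ℝ) 1 ∈ 𝓝[>] (0:ℝ) := by
        apply Ioc_mem_nhdsGT_of_mem
        constructor <;> norm_num
      filter_upwards [hmem] with φ hφ
      filter_upwards with ω
      obtain ⟨hφ0, hφ1⟩ := hφ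
      rw [Real.norm_eq_abs, abs_div, abs_of_pos hφ0, div_le_iff₀ hφ0]
      have hexpmax : (1:ℝ) ≤ Real.exp (max B 0) := by
        rw [show (1:ℝ) = Real.exp 0 by simp]
        exact Real.exp_le_exp.mpr (le_max_right B 0)
      rcases le_or_gt 0 (Y ω) with hy | hy
      · have h1 : Real.exp (φ * Y ω) - 1 ≤ (φ * Y ω) * Real.exp (φ * Y ω) :=
          exp_sub_one_le' _
        have h2 : Real.exp (φ * Y ω) ≤ Real.exp (max B 0) := by
          apply Real.exp_le_exp.mpr
          have := hYB ω
          nlinarith [le_max_left B 0, le_max_right B 0]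
        have h3 : |Real.exp (φ * Y ω) - 1| = Real.exp (φ * Y ω) - 1 := by
          rw [abs_of_nonneg]
          nlinarith [Real.add_one_le_exp (φ * Y ω), mul_nonneg hφ0.le hy]
        rw [h3, abs_of_nonneg hy]
        nlinarith [Real.exp_pos (φ * Y ω), mul_nonneg hφ0.le hy,
          mul_nonneg (mul_nonneg hφ0.le hy) (Real.exp_pos (φ * Y ω)).le]
      · have ht : φ * Y ω ≤ 0 := by nlinarith
        have he1 : Real.exp (φ * Y ω) ≤ 1 := Real.exp_le_one_iff.mpr ht
        have h1 : |Real.exp (φ * Y ω) - 1| ≤ φ * |Y ω| := by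
          rw [abs_of_nonpos (by linarith), abs_of_neg hy]
          have := Real.add_one_le_exp (φ * Y ω)
          nlinarith
        calc |Real.exp (φ * Y ω) - 1| ≤ φ * |Y ω| := h1
        _ ≤ |Y ω| * Real.exp (max B 0) * φ := by
            nlinarith [mul_nonneg (mul_nonneg (abs_nonneg (Y ω))
              (sub_nonneg.mpr hexpmax)) hφ0.le]
    · exact hYint.abs.mul_const _
    · filter_upwards with ω
      have hd : HasDerivAt (fun φ : ℝ => Real.exp (φ * Y ω)) (Y ω) 0 := by
        have h1 : HasDerivAt (fun φ : ℝ => φ * Y ω) (Y ω) 0 := hasDerivAt_mul_const (Y ω)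
        simpa using h1.exp
      have h2 := (hasDerivAt_iff_tendsto_slope.mp hd).mono_left
        (nhdsWithin_mono (0:ℝ) (fun x hx => ne_of_gt hx))
      apply h2.congr
      intro φ
      simp [slope_def_field]
  rw [hY0] at Hm
  have Hlt : ∀ᶠ φ in 𝓝[>] (0:ℝ), ∫ ω, (Real.exp (φ * Y ω) - 1) / φ ∂ℙ < ρ :=
    Hm.eventually (eventually_lt_nhds hρ) |>.mono (fun φ h => h)
  obtain ⟨φ, hlt, hφpos⟩ := (Hlt.and self_mem_nhdsWithin).exists
  refine ⟨φ, hφpos, hint φ hφpos.le, ?_⟩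
  have hI : ∫ ω, (Real.exp (φ * Y ω) - 1) / φ ∂ℙ = (mgf Y ℙ φ - 1) / φ := by
    rw [integral_div, integral_sub (hint φ hφpos.le) (integrable_const 1)]
    simp [mgf]
  rw [hI, div_lt_iff₀ hφpos] at hlt
  have := Real.add_one_le_exp (φ * ρ)
  nlinarith

private lemma exists_eta (Λ : ℝ → ℝ) (γ : ℝ) (hdiff : DifferentiableAt ℝ Λ γ)
    (hΛγ : Λ γ = 0) {w r : ℝ} (hw : 0 < w) (hr : 0 < r) :
    ∃ η : ℝ, 0 < η ∧ η < r ∧ Λ (γ + η) ≤ (deriv Λ γ + w) * η := by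
  have hd := hdiff.hasDerivAt
  have h2 := (hasDerivAt_iff_tendsto_slope.mp hd).mono_left
    (nhdsWithin_mono γ (fun x (hx : x ∈ Set.Ioi γ) => ne_of_gt hx))
  have Hlt : ∀ᶠ θ in 𝓝[>] γ, slope Λ γ θ < deriv Λ γ + w :=
    h2.eventually (eventually_lt_nhds (by linarith))
  have Hmem : Set.Ioo γ (γ + r) ∈ 𝓝[>] γ := Ioo_mem_nhdsGT_of_mem (by constructor <;> linarith)
  obtain ⟨θ, hslope, hθmem⟩ := (Hlt.and Hmem).exists
  refine ⟨θ - γ, by linarith [hθmem.1], by linarith [hθmem.2], ?_⟩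
  have hpos : 0 < θ - γ := by linarith [hθmem.1]
  rw [slope_def_field, hΛγ, sub_zero, div_lt_iff₀ hpos] at hslope
  have heq : γ + (θ - γ) = θ := by ring
  rw [heq]
  linarith

private lemma tendsto_sqrt_log_atTop' :
    Tendsto (fun N : ℕ => Real.sqrt (Real.log N)) atTop atTop := by
  have h1 : Tendsto (fun N : ℕ => Real.log N) atTop atTop :=
    Real.tendsto_log_atTop.comp tendsto_natCast_atTop_atTop
  rw [tendsto_atTop] at h1 ⊢
  intro b
  filter_upwards [h1 ((max b 0) ^ 2)] with N hN
  calc b ≤ max b 0 := le_max_left _ _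
  _ = Real.sqrt ((max b 0) ^ 2) := (Real.sqrt_sq (le_max_right _ _)).symm
  _ ≤ Real.sqrt (Real.log N) := Real.sqrt_le_sqrt hN

private lemma eventually_b_pos' (γ x : ℝ) (hγ : 0 < γ) :
    ∀ᶠ N : ℕ in atTop, 0 < (1 / γ) * Real.log N + x * Real.sqrt (Real.log N) := by
  have h1 : Tendsto (fun N : ℕ => Real.log N) atTop atTop :=
    Real.tendsto_log_atTop.comp tendsto_natCast_atTop_atTop
  filter_upwards [h1.eventually_ge_atTop 1,
    tendsto_sqrt_log_atTop'.eventually_ge_atTop (γ * (|x| + 1))] with N hL hs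
  set L := Real.log N with hLdef
  have hL0 : 0 ≤ L := by linarith
  have hsq : Real.sqrt L * Real.sqrt L = L := Real.mul_self_sqrt hL0
  have hs1 : (1:ℝ) ≤ Real.sqrt L := by
    rw [show (1:ℝ) = Real.sqrt 1 by simp]
    exact Real.sqrt_le_sqrt hL
  have hx : -x ≤ |x| := neg_le_abs x
  have h3 : (1/γ) * L + x * Real.sqrt L ≥ Real.sqrt L := by
    have heq : (1/γ) * L = (1/γ) * Real.sqrt L * Real.sqrt L := by rw [mul_assoc, hsq]
    rw [heq]
    have h4 : (1/γ) * Real.sqrt L ≥ |x| + 1 := by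
      rw [ge_iff_le, ← mul_le_mul_iff_right₀ hγ]
      have heq2 : γ * (1 / γ * Real.sqrt L) = Real.sqrt L := by field_simp
      rw [heq2]
      exact hs
    nlinarith
  linarith

private lemma triv_case {Ω : Type*} [MeasureSpace Ω] [IsProbabilityMeasure (ℙ : Measure Ω)]
    (W : ℕ → ℕ → Ω → ℝ) (C γ x : ℝ) (hγ : 0 < γ) (hC : C ≤ 0) :
    Tendsto (fun N : ℕ =>
      (ℙ {ω : Ω | (⨆ i ∈ Finset.Icc 1 N, ⨆ k : ℕ, ⨆ _ : (k : ℝ) < C * Real.log N, W i k ω)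
        > (1 / γ) * Real.log N + x * Real.sqrt (Real.log N)}).toReal) atTop (𝓝 0) := by
  have h1 : Tendsto (fun N : ℕ => Real.log N) atTop atTop :=
    Real.tendsto_log_atTop.comp tendsto_natCast_atTop_atTop
  apply Tendsto.congr' ?_ (tendsto_const_nhds (x := (0:ℝ)))
  filter_upwards [eventually_b_pos' γ x hγ, h1.eventually_ge_atTop 0] with N hb hL0
  have hempty : {ω : Ω | (⨆ i ∈ Finset.Icc 1 N, ⨆ k : ℕ,
      ⨆ _ : (k : ℝ) < C * Real.log N, W i k ω)
      > (1 / γ) * Real.log N + x * Real.sqrt (Real.log N)} = ∅ := by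
    ext ω
    simp only [Set.mem_setOf_eq, Set.mem_empty_iff_false, iff_false, not_lt, gt_iff_lt]
    have hnk : ∀ k : ℕ, ¬((k : ℝ) < C * Real.log N) := by
      intro k hk
      have h5 : C * Real.log N ≤ 0 := mul_nonpos_of_nonpos_of_nonneg hC hL0
      have h6 : (0:ℝ) ≤ k := Nat.cast_nonneg k
      linarith
    have hsup : (⨆ i ∈ Finset.Icc 1 N, ⨆ k : ℕ,
        ⨆ _ : (k : ℝ) < C * Real.log N, W i k ω) = 0 := by
      have hin : ∀ i : ℕ, (⨆ k : ℕ, ⨆ _ : (k : ℝ) < C * Real.log N, W i k ω) = 0 := by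
        intro i
        have h7 : (fun k : ℕ => ⨆ _ : (k : ℝ) < C * Real.log N, W i k ω) = fun _ => (0:ℝ) :=
          funext fun k => real_iSup_false (hnk k) _
        rw [h7]
        exact ciSup_const
      have h8 : (fun i : ℕ => ⨆ _ : i ∈ Finset.Icc 1 N, ⨆ k : ℕ,
          ⨆ _ : (k : ℝ) < C * Real.log N, W i k ω) = fun _ => (0:ℝ) := by
        funext i
        rw [hin i]
        by_cases hi : i ∈ Finset.Icc 1 N
        · exact real_iSup_true hi 0
        · exact real_iSup_false hi _
      rw [iSup, h8]
      exact ciSup_const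
    rw [hsup]
    linarith
  rw [hempty]
  simp

private lemma exists_of_sup_gt {N : ℕ} (f : ℕ → ℕ → ℝ) (b CL : ℝ) (hb : 0 < b)
    (h : (⨆ i ∈ Finset.Icc 1 N, ⨆ k : ℕ, ⨆ _ : (k : ℝ) < CL, f i k) > b) :
    ∃ i ∈ Finset.Icc 1 N, ∃ k : ℕ, (k : ℝ) < CL ∧ b < f i k := by
  obtain ⟨i, hi⟩ := exists_lt_of_lt_ciSup h
  by_cases hmem : i ∈ Finset.Icc 1 N
  · rw [real_iSup_true hmem] at hi
    obtain ⟨k, hk⟩ := exists_lt_of_lt_ciSup hi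
    by_cases hcond : (k : ℝ) < CL
    · rw [real_iSup_true hcond] at hk
      exact ⟨i, hmem, k, hcond, hk⟩
    · rw [real_iSup_false hcond] at hk
      linarith
  · rw [real_iSup_false hmem] at hi
    linarith

private lemma chernoff_sum {Ω : Type*} [MeasureSpace Ω] [IsProbabilityMeasure (ℙ : Measure Ω)]
    (Z : ℕ → Ω → ℝ) (hZm : ∀ j, Measurable (Z j))
    (hZind : iIndepFun Z ℙ)
    (Z₀ : Ω → ℝ) (hident : ∀ j, IdentDistrib (Z j) Z₀ ℙ ℙ)
    {t : ℝ} (ht : 0 ≤ t) (hint : Integrable (fun ω => Real.exp (t * Z₀ ω)) ℙ)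
    (k : ℕ) (u : ℝ) :
    (ℙ {ω | u ≤ ∑ j ∈ Finset.Icc 1 k, Z j ω}).toReal ≤
      Real.exp (-t * u) * (mgf Z₀ ℙ t) ^ k := by
  have hmeas_exp : Measurable (fun y : ℝ => Real.exp (t * y)) :=
    (measurable_id.const_mul t).exp
  have hmgfj : ∀ j, mgf (Z j) ℙ t = mgf Z₀ ℙ t := by
    intro j
    have h := ((hident j).comp hmeas_exp).integral_eq
    simpa [mgf] using h
  have hintj : ∀ j, Integrable (fun ω => Real.exp (t * Z j ω)) ℙ := by
    intro j
    exact (((hident j).comp hmeas_exp).integrable_iff).mpr hint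
  have hXint : Integrable (fun ω => Real.exp (t * (∑ j ∈ Finset.Icc 1 k, Z j) ω)) ℙ :=
    hZind.integrable_exp_mul_sum hZm (fun j _ => hintj j)
  have hset : {ω : Ω | u ≤ ∑ j ∈ Finset.Icc 1 k, Z j ω} =
      {ω : Ω | u ≤ (∑ j ∈ Finset.Icc 1 k, Z j) ω} := by
    ext ω
    simp [Finset.sum_apply]
  rw [hset]
  calc (ℙ {ω : Ω | u ≤ (∑ j ∈ Finset.Icc 1 k, Z j) ω}).toReal
      ≤ Real.exp (-t * u) * mgf (∑ j ∈ Finset.Icc 1 k, Z j) ℙ t :=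
        measure_ge_le_exp_mul_mgf u ht hXint
    _ = Real.exp (-t * u) * (mgf Z₀ ℙ t) ^ k := by
        rw [hZind.mgf_sum hZm]
        congr 1
        rw [Finset.prod_congr rfl (fun j _ => hmgfj j), Finset.prod_const, Nat.card_Icc]
        norm_num

private lemma tendsto_aux (c κ β : ℝ) (hβ : 0 < β) :
    Tendsto (fun N : ℕ => (⌈c * Real.log N⌉₊ : ℝ) *
      Real.exp (-β * Real.log N + κ * Real.sqrt (Real.log N))) atTop (𝓝 0) := by
  have hβ2 : (0:ℝ) < β/2 := by linarith
  have h1 : Tendsto (fun y : ℝ => (β/2) * y) atTop atTop :=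
    (tendsto_id (α := ℝ)).const_mul_atTop hβ2
  have h2 : Tendsto (fun y : ℝ => ((β/2) * y) * Real.exp (-((β/2) * y))) atTop (𝓝 0) := by
    have := (tendsto_pow_mul_exp_neg_atTop_nhds_zero 1).comp h1
    simpa [Function.comp_def] using this
  have h3 : Tendsto (fun y : ℝ => y * Real.exp (-((β/2) * y))) atTop (𝓝 0) := by
    have := h2.const_mul (2/β)
    rw [mul_zero] at this
    apply this.congr
    intro y
    field_simp
  have h4 : Tendsto (fun y : ℝ => Real.exp (-((β/2) * y))) atTop (𝓝 0) :=
    Real.tendsto_exp_neg_atTop_nhds_zero.comp h1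
  have hg : Tendsto (fun y : ℝ => (|c| * y + 1) * Real.exp (κ^2/(2*β)) *
      Real.exp (-((β/2) * y))) atTop (𝓝 0) := by
    have := ((h3.const_mul (|c| * Real.exp (κ^2/(2*β)))).add
      (h4.const_mul (Real.exp (κ^2/(2*β)))))
    rw [mul_zero, mul_zero, add_zero] at this
    apply this.congr
    intro y
    ring
  have hL : Tendsto (fun N : ℕ => Real.log N) atTop atTop :=
    Real.tendsto_log_atTop.comp tendsto_natCast_atTop_atTop
  have hcomp := hg.comp hL
  apply squeeze_zero' (t₀ := atTop) ?_ ?_ hcomp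
  · filter_upwards with N
    positivity
  · filter_upwards [hL.eventually_ge_atTop 0] with N hL0
    set L := Real.log N
    have hceil : (⌈c * L⌉₊ : ℝ) ≤ |c| * L + 1 := by
      rcases le_or_gt (c * L) 0 with h | h
      · rw [Nat.ceil_eq_zero.mpr h]
        have : 0 ≤ |c| * L := mul_nonneg (abs_nonneg c) hL0
        norm_num
        linarith
      · have h5 : (⌈c * L⌉₊ : ℝ) < c * L + 1 := Nat.ceil_lt_add_one h.le
        have h6 : c * L ≤ |c| * L := mul_le_mul_of_nonneg_right (le_abs_self c) hL0
        linarith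
    have hexp : Real.exp (-β * L + κ * Real.sqrt L) ≤
        Real.exp (κ^2/(2*β)) * Real.exp (-((β/2) * L)) := by
      rw [← Real.exp_add]
      apply Real.exp_le_exp.mpr
      have hs : Real.sqrt L * Real.sqrt L = L := Real.mul_self_sqrt hL0
      have hkey : κ * Real.sqrt L ≤ (β/2) * L + κ^2/(2*β) := by
        rw [← sub_nonneg]
        have expand : (β/2) * L + κ^2/(2*β) - κ * Real.sqrt L =
            (β^2 * L - 2*β*κ*(Real.sqrt L) + κ^2) / (2*β) := by
          field_simp
          ring
        rw [expand]
        apply div_nonneg _ (by linarith)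
        nlinarith [sq_nonneg (β * Real.sqrt L - κ)]
      linarith
    calc (⌈c * L⌉₊ : ℝ) * Real.exp (-β * L + κ * Real.sqrt L)
        ≤ (|c| * L + 1) * (Real.exp (κ^2/(2*β)) * Real.exp (-((β/2) * L))) := by
          apply mul_le_mul hceil hexp (Real.exp_pos _).le
          positivity
      _ = (|c| * L + 1) * Real.exp (κ^2/(2*β)) * Real.exp (-((β/2) * L)) := by ring

end Aux

section Aux2

private lemma real_iSup_false2 {p : Prop} (hp : ¬p) (f : p → ℝ) : (⨆ h : p, f h) = 0 := by
  haveI : IsEmpty p := ⟨hp⟩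
  exact Real.iSup_of_isEmpty _

private lemma real_iSup_true2 {p : Prop} (hp : p) (a : ℝ) : (⨆ _ : p, a) = a := by
  haveI : Nonempty p := ⟨hp⟩
  exact ciSup_const

private lemma exists_of_sup_gt2 {N : ℕ} (f : ℕ → ℕ → ℝ) (b CL : ℝ) (hb : 0 < b)
    (h : (⨆ i ∈ Finset.Icc 1 N, ⨆ k : ℕ, ⨆ _ : (k : ℝ) < CL, f i k) > b) :
    ∃ i ∈ Finset.Icc 1 N, ∃ k : ℕ, (k : ℝ) < CL ∧ b < f i k := by
  obtain ⟨i, hi⟩ := exists_lt_of_lt_ciSup h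
  by_cases hmem : i ∈ Finset.Icc 1 N
  · rw [real_iSup_true2 hmem] at hi
    obtain ⟨k, hk⟩ := exists_lt_of_lt_ciSup hi
    by_cases hcond : (k : ℝ) < CL
    · rw [real_iSup_true2 hcond] at hk
      exact ⟨i, hmem, k, hcond, hk⟩
    · rw [real_iSup_false2 hcond] at hk
      linarith
  · rw [real_iSup_false2 hmem] at hi
    linarith

end Aux2

set_option maxHeartbeats 1000000 in
private lemma main_case {Ω : Type*} [MeasureSpace Ω] [IsProbabilityMeasure (ℙ : Measure Ω)]
    (A : ℕ → Ω → ℝ) (S : ℕ → ℕ → Ω → ℝ)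
    (hA_meas : ∀ j, Measurable (A j)) (hS_meas : ∀ i j, Measurable (S i j))
    (hA_nonneg : ∀ j ω, 0 ≤ A j ω)
    (h_indep : iIndepFun
      (fun p : (ℕ × ℕ) ⊕ ℕ => Sum.elim (fun q => S q.1 q.2) A p) ℙ)
    (hA_ident : ∀ j, IdentDistrib (A j) (A 1) ℙ ℙ)
    (hS_ident : ∀ i j, IdentDistrib (S i j) (S 1 1) ℙ ℙ)
    (lam : ℝ) (hlam : 0 < lam)
    (hA_int : Integrable (A 1) ℙ)
    (hA_mean : ∫ ω, A 1 ω ∂ℙ = 1 / lam)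
    (Λ : ℝ → ℝ)
    (hΛ : ∀ θ, Λ θ = Real.log (∫ ω, Real.exp (θ * (S 1 1 ω - 1 / lam)) ∂ℙ))
    (γ : ℝ) (hγ : 0 < γ) (hΛγ : Λ γ = 0)
    (hγ_int : γ ∈ interior {θ : ℝ |
      Integrable (fun ω => Real.exp (θ * (S 1 1 ω - 1 / lam))) ℙ})
    (hΛ'pos : 0 < deriv Λ γ) (hdiff : DifferentiableAt ℝ Λ γ)
    (C : ℝ) (hCpos : 0 < C) (hClt : C < 1 / (deriv Λ γ * γ)) (x : ℝ) :
    Tendsto (fun N : ℕ =>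
      (ℙ {ω : Ω | (⨆ i ∈ Finset.Icc 1 N, ⨆ k : ℕ, ⨆ _ : (k : ℝ) < C * Real.log N,
        ∑ j ∈ Finset.Icc 1 k, (S i j ω - A j ω))
        > (1 / γ) * Real.log N + x * Real.sqrt (Real.log N)}).toReal) atTop (𝓝 0) := by
  have hΛ'ne : deriv Λ γ ≠ 0 := ne_of_gt hΛ'pos
  have hγne : γ ≠ 0 := ne_of_gt hγ
  set Λ' : ℝ := deriv Λ γ with hΛ'def
  set ε' : ℝ := 1 / (Λ' * γ) - C with hε'def
  have hε'pos : 0 < ε' := by rw [hε'def]; linarith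
  obtain ⟨r, hr, hball⟩ := Metric.mem_nhds_iff.mp (mem_interior_iff_mem_nhds.mp hγ_int)
  have hwpos : 0 < ε' * Λ' ^ 2 * γ / 2 := by positivity
  obtain ⟨η, hη0, hηr, hηΛ⟩ := exists_eta Λ γ hdiff hΛγ hwpos hr
  rw [← hΛ'def] at hηΛ
  set w : ℝ := ε' * Λ' ^ 2 * γ / 2 with hwdef
  set θ : ℝ := γ + η with hθdef
  have hθpos : 0 < θ := by rw [hθdef]; linarith
  have hθint : Integrable (fun ω => Real.exp (θ * (S 1 1 ω - 1 / lam))) ℙ := by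
    apply hball
    rw [Metric.mem_ball, Real.dist_eq]
    rw [show θ - γ = η by rw [hθdef]; ring, abs_of_pos hη0]
    exact hηr
  set Λp : ℝ := max (Λ θ) 0 with hΛpdef
  have hΛp0 : 0 ≤ Λp := le_max_right _ _
  have hΛple : Λp ≤ (Λ' + w) * η := by
    apply max_le hηΛ
    positivity
  set ρ : ℝ := ε' * Λ' * η / (4 * θ) with hρdef
  have hρpos : 0 < ρ := by positivity
  have hθρ : θ * ρ = ε' * Λ' * η / 4 := by
    rw [hρdef]
    field_simp
  set α : ℝ := θ / γ - 1 - θ * ρ - C * Λp with hαdef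
  clear_value Λ' ε' w θ Λp ρ α
  have hαpos : 0 < α := by
    have h1 : C * Λp ≤ C * ((Λ' + w) * η) := mul_le_mul_of_nonneg_left hΛple hCpos.le
    have h2 : (1 / (Λ' * γ)) * ((Λ' + w) * η) = η / γ + ε' * Λ' * η / 2 := by
      rw [hwdef]
      field_simp
    have h3 : C * ((Λ' + w) * η) = (1 / (Λ' * γ)) * ((Λ' + w) * η) - ε' * ((Λ' + w) * η) := by
      rw [hε'def]; ring
    have h4 : ε' * Λ' * η ≤ ε' * ((Λ' + w) * η) := by nlinarith [mul_pos (mul_pos hε'pos hwpos) hη0]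
    have h5 : θ / γ - 1 = η / γ := by
      rw [hθdef]
      field_simp
      ring
    have h6 : 0 < ε' * Λ' * η := by positivity
    have hCΛp : C * Λp ≤ η / γ - ε' * Λ' * η / 2 := by linarith
    rw [hαdef, h5, hθρ]
    linarith
  -- basic random variables
  have hM : mgf (fun ω => S 1 1 ω - 1 / lam) ℙ θ = Real.exp (Λ θ) := by
    rw [hΛ θ]
    exact (Real.exp_log (mgf_pos hθint)).symm
  have hYmeas : Measurable (fun ω => 1 / lam - A 1 ω) := measurable_const.sub (hA_meas 1)
  have hYint : Integrable (fun ω => 1 / lam - A 1 ω) ℙ := (integrable_const (1/lam)).sub hA_int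
  have hYB : ∀ ω, 1 / lam - A 1 ω ≤ 1 / lam := by
    intro ω
    have := hA_nonneg 1 ω
    linarith
  have hYmean : ∫ ω, (1 / lam - A 1 ω) ∂ℙ = 0 := by
    rw [integral_sub (integrable_const _) hA_int, hA_mean]
    simp
  obtain ⟨φ, hφpos, hφint, hφmgf⟩ := exists_small_mgf (fun ω => 1 / lam - A 1 ω)
    hYmeas hYint (1/lam) hYB hYmean (ρ := ρ / (2 * C)) (by positivity)
  -- independent families
  have hZAind : iIndepFun (fun j => fun ω => 1 / lam - A j ω) ℙ := by
    have hbase : iIndepFun A ℙ :=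
      iIndepFun_precomp h_indep Sum.inr_injective
    exact hbase.comp (fun _ => fun a => 1 / lam - a)
      (fun _ => measurable_const.sub measurable_id)
  have hZAident : ∀ j, IdentDistrib (fun ω => 1 / lam - A j ω) (fun ω => 1 / lam - A 1 ω) ℙ ℙ :=
    fun j => (hA_ident j).comp (measurable_const.sub measurable_id)
  have hZAm : ∀ j, Measurable (fun ω => 1 / lam - A j ω) :=
    fun j => measurable_const.sub (hA_meas j)
  have hZSind : ∀ i, iIndepFun
      (fun j => fun ω => S i j ω - 1 / lam) ℙ := by
    intro i
    have hinj : Function.Injective (fun j : ℕ => (Sum.inl (i, j) : (ℕ × ℕ) ⊕ ℕ)) := by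
      intro a b h
      simpa using h
    have hbase : iIndepFun (fun j => S i j) ℙ :=
      iIndepFun_precomp h_indep hinj
    exact hbase.comp (fun _ => fun a => a - 1 / lam)
      (fun _ => measurable_id.sub measurable_const)
  have hZSident : ∀ i j, IdentDistrib (fun ω => S i j ω - 1 / lam)
      (fun ω => S 1 1 ω - 1 / lam) ℙ ℙ :=
    fun i j => (hS_ident i j).comp (measurable_id.sub measurable_const)
  have hZSm : ∀ i j, Measurable (fun ω => S i j ω - 1 / lam) :=
    fun i j => (hS_meas i j).sub measurable_const
  -- squeeze
  have hLtend : Tendsto (fun N : ℕ => Real.log N) atTop atTop :=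
    Real.tendsto_log_atTop.comp tendsto_natCast_atTop_atTop
  have hB : Tendsto (fun N : ℕ =>
      (⌈C * Real.log N⌉₊ : ℝ) * Real.exp (-(φ * ρ / 2) * Real.log N
        + 0 * Real.sqrt (Real.log N))
      + (⌈C * Real.log N⌉₊ : ℝ) * Real.exp (-α * Real.log N
        + (θ * |x|) * Real.sqrt (Real.log N))) atTop (𝓝 0) := by
    have := (tendsto_aux C 0 (φ * ρ / 2) (by positivity)).add (tendsto_aux C (θ * |x|) α hαpos)
    simpa using this
  apply squeeze_zero' ?_ ?_ hB
  · filter_upwards with N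
    exact ENNReal.toReal_nonneg
  · filter_upwards [eventually_b_pos' γ x hγ, hLtend.eventually_ge_atTop 0,
      eventually_ge_atTop 1] with N hb hL0 hN1
    set L := Real.log N with hLdef
    set b := (1 / γ) * L + x * Real.sqrt L with hbdef
    set K := ⌈C * L⌉₊ with hKdef
    set e1 := Real.exp (-(φ * ρ / 2) * L) with he1def
    set e2 := Real.exp (-(1 + α) * L + θ * |x| * Real.sqrt L) with he2def
    set E1 : ℕ → Set Ω := fun k => {ω | ρ * L ≤ ∑ j ∈ Finset.Icc 1 k, (1 / lam - A j ω)}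
      with hE1
    set E2 : ℕ → ℕ → Set Ω := fun i k =>
      {ω | b - ρ * L ≤ ∑ j ∈ Finset.Icc 1 k, (S i j ω - 1 / lam)} with hE2
    clear_value L b
    -- event inclusion
    have hincl : {ω : Ω |
        (⨆ i ∈ Finset.Icc 1 N, ⨆ k : ℕ, ⨆ _ : (k : ℝ) < C * L,
          ∑ j ∈ Finset.Icc 1 k, (S i j ω - A j ω)) > b} ⊆
        (⋃ k ∈ Finset.range K, E1 k) ∪
        (⋃ i ∈ Finset.Icc 1 N, ⋃ k ∈ Finset.range K, E2 i k) := by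
      intro ω hω
      obtain ⟨i, hiN, k, hkC, hgt⟩ := exists_of_sup_gt2 _ b (C * L) hb hω
      have hkK : k ∈ Finset.range K := Finset.mem_range.mpr (Nat.lt_ceil.mpr hkC)
      have hsplit : ∑ j ∈ Finset.Icc 1 k, (S i j ω - A j ω) =
          (∑ j ∈ Finset.Icc 1 k, (S i j ω - 1 / lam))
          + (∑ j ∈ Finset.Icc 1 k, (1 / lam - A j ω)) := by
        rw [← Finset.sum_add_distrib]
        apply Finset.sum_congr rfl
        intro j _
        ring
      by_cases hcase : ρ * L ≤ ∑ j ∈ Finset.Icc 1 k, (1 / lam - A j ω)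
      · left
        exact Set.mem_biUnion hkK hcase
      · right
        push_neg at hcase
        have hmem2 : b - ρ * L ≤ ∑ j ∈ Finset.Icc 1 k, (S i j ω - 1 / lam) := by
          rw [hsplit] at hgt
          linarith
        exact Set.mem_biUnion hiN (Set.mem_biUnion hkK hmem2)
    -- per-event bounds
    have he1b : ∀ k ∈ Finset.range K, (ℙ (E1 k)).toReal ≤ e1 := by
      intro k hk
      have hkC : (k : ℝ) < C * L := Nat.lt_ceil.mp (Finset.mem_range.mp hk)
      have hch := chernoff_sum (fun j => fun ω => 1 / lam - A j ω) hZAm hZAind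
        (fun ω => 1 / lam - A 1 ω) hZAident hφpos.le hφint k (ρ * L)
      have hpow : (mgf (fun ω => 1 / lam - A 1 ω) ℙ φ) ^ k
          ≤ Real.exp (φ * (ρ / (2 * C)) * k) := by
        calc (mgf (fun ω => 1 / lam - A 1 ω) ℙ φ) ^ k
            ≤ (Real.exp (φ * (ρ / (2 * C)))) ^ k := pow_le_pow_left₀ mgf_nonneg hφmgf k
          _ = Real.exp (φ * (ρ / (2 * C)) * k) := by
              rw [← Real.exp_nat_mul]
              congr 1
              ring
      have hb2 : Real.exp (φ * (ρ / (2 * C)) * k) ≤ Real.exp (φ * ρ * L / 2) := by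
        apply Real.exp_le_exp.mpr
        have h0 : 0 ≤ φ * (ρ / (2 * C)) := by positivity
        have h1 : φ * (ρ / (2 * C)) * k ≤ φ * (ρ / (2 * C)) * (C * L) :=
          mul_le_mul_of_nonneg_left hkC.le h0
        have h2 : φ * (ρ / (2 * C)) * (C * L) = φ * ρ * L / 2 := by
          field_simp
        linarith
      calc (ℙ (E1 k)).toReal
          ≤ Real.exp (-φ * (ρ * L)) * (mgf (fun ω => 1 / lam - A 1 ω) ℙ φ) ^ k := hch
        _ ≤ Real.exp (-φ * (ρ * L)) * Real.exp (φ * ρ * L / 2) := by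
            apply mul_le_mul_of_nonneg_left (le_trans hpow hb2) (Real.exp_pos _).le
        _ = e1 := by
            rw [he1def, ← Real.exp_add]
            congr 1
            ring
    have he2b : ∀ i ∈ Finset.Icc 1 N, ∀ k ∈ Finset.range K, (ℙ (E2 i k)).toReal ≤ e2 := by
      intro i _ k hk
      have hkC : (k : ℝ) < C * L := Nat.lt_ceil.mp (Finset.mem_range.mp hk)
      have hch := chernoff_sum (fun j => fun ω => S i j ω - 1 / lam) (hZSm i) (hZSind i)
        (fun ω => S 1 1 ω - 1 / lam) (hZSident i) hθpos.le hθint k (b - ρ * L)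
      have hpow : (mgf (fun ω => S 1 1 ω - 1 / lam) ℙ θ) ^ k ≤ Real.exp (C * L * Λp) := by
        rw [hM, ← Real.exp_nat_mul]
        apply Real.exp_le_exp.mpr
        have hΛθΛp : Λ θ ≤ Λp := by rw [hΛpdef]; exact le_max_left _ _
        have h1 : (k:ℝ) * Λ θ ≤ (k:ℝ) * Λp :=
          mul_le_mul_of_nonneg_left hΛθΛp (Nat.cast_nonneg k)
        have h2 : (k:ℝ) * Λp ≤ C * L * Λp :=
          mul_le_mul_of_nonneg_right hkC.le hΛp0
        linarith
      calc (ℙ (E2 i k)).toReal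
          ≤ Real.exp (-θ * (b - ρ * L)) * (mgf (fun ω => S 1 1 ω - 1 / lam) ℙ θ) ^ k := hch
        _ ≤ Real.exp (-θ * (b - ρ * L)) * Real.exp (C * L * Λp) := by
            apply mul_le_mul_of_nonneg_left hpow (Real.exp_pos _).le
        _ = Real.exp (-θ * b + θ * ρ * L + C * L * Λp) := by
            rw [← Real.exp_add]
            congr 1
            ring
        _ ≤ e2 := by
            rw [he2def]
            apply Real.exp_le_exp.mpr
            have hb3 : -θ * b = -(θ / γ) * L - θ * x * Real.sqrt L := by
              rw [hbdef]
              field_simp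
              ring
            have hxabs : -(θ * x * Real.sqrt L) ≤ θ * |x| * Real.sqrt L := by
              have h4 : -x ≤ |x| := neg_le_abs x
              have h5 : 0 ≤ θ * Real.sqrt L := mul_nonneg hθpos.le (Real.sqrt_nonneg L)
              nlinarith
            have halg : -(θ / γ) * L + θ * ρ * L + C * L * Λp = -(1 + α) * L := by
              rw [hαdef]
              ring
            linarith [hb3, halg, hxabs]
    -- assemble
    have hPU1 : ℙ (⋃ k ∈ Finset.range K, E1 k) ≤ ENNReal.ofReal ((K : ℝ) * e1) := by
      calc ℙ (⋃ k ∈ Finset.range K, E1 k) ≤ ∑ k ∈ Finset.range K, ℙ (E1 k) :=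
            measure_biUnion_finset_le _ _
        _ ≤ ∑ _k ∈ Finset.range K, ENNReal.ofReal e1 := by
            apply Finset.sum_le_sum
            intro k hk
            exact (ENNReal.le_ofReal_iff_toReal_le (measure_ne_top ℙ _)
              (Real.exp_pos _).le).mpr (he1b k hk)
        _ = ENNReal.ofReal ((K : ℝ) * e1) := by
            rw [Finset.sum_const, Finset.card_range, nsmul_eq_mul,
              ENNReal.ofReal_mul (Nat.cast_nonneg K), ENNReal.ofReal_natCast]
    have hPU2 : ℙ (⋃ i ∈ Finset.Icc 1 N, ⋃ k ∈ Finset.range K, E2 i k)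
        ≤ ENNReal.ofReal ((N : ℝ) * ((K : ℝ) * e2)) := by
      calc ℙ (⋃ i ∈ Finset.Icc 1 N, ⋃ k ∈ Finset.range K, E2 i k)
          ≤ ∑ i ∈ Finset.Icc 1 N, ℙ (⋃ k ∈ Finset.range K, E2 i k) :=
            measure_biUnion_finset_le _ _
        _ ≤ ∑ i ∈ Finset.Icc 1 N, ENNReal.ofReal ((K : ℝ) * e2) := by
            apply Finset.sum_le_sum
            intro i hi
            calc ℙ (⋃ k ∈ Finset.range K, E2 i k) ≤ ∑ k ∈ Finset.range K, ℙ (E2 i k) :=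
                  measure_biUnion_finset_le _ _
              _ ≤ ∑ _k ∈ Finset.range K, ENNReal.ofReal e2 := by
                  apply Finset.sum_le_sum
                  intro k hk
                  exact (ENNReal.le_ofReal_iff_toReal_le (measure_ne_top ℙ _)
                    (Real.exp_pos _).le).mpr (he2b i hi k hk)
              _ = ENNReal.ofReal ((K : ℝ) * e2) := by
                  rw [Finset.sum_const, Finset.card_range, nsmul_eq_mul,
                    ENNReal.ofReal_mul (Nat.cast_nonneg K), ENNReal.ofReal_natCast]
        _ = ENNReal.ofReal ((N : ℝ) * ((K : ℝ) * e2)) := by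
            rw [Finset.sum_const, Nat.card_Icc, nsmul_eq_mul,
              ENNReal.ofReal_mul (Nat.cast_nonneg N), ENNReal.ofReal_natCast]
            norm_num
    have htotal : ℙ {ω : Ω |
        (⨆ i ∈ Finset.Icc 1 N, ⨆ k : ℕ, ⨆ _ : (k : ℝ) < C * L,
          ∑ j ∈ Finset.Icc 1 k, (S i j ω - A j ω)) > b}
        ≤ ENNReal.ofReal ((K : ℝ) * e1 + (N : ℝ) * ((K : ℝ) * e2)) := by
      calc ℙ {ω : Ω | (⨆ i ∈ Finset.Icc 1 N, ⨆ k : ℕ, ⨆ _ : (k : ℝ) < C * L,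
              ∑ j ∈ Finset.Icc 1 k, (S i j ω - A j ω)) > b}
          ≤ ℙ ((⋃ k ∈ Finset.range K, E1 k) ∪
              (⋃ i ∈ Finset.Icc 1 N, ⋃ k ∈ Finset.range K, E2 i k)) := measure_mono hincl
        _ ≤ ℙ (⋃ k ∈ Finset.range K, E1 k)
            + ℙ (⋃ i ∈ Finset.Icc 1 N, ⋃ k ∈ Finset.range K, E2 i k) := measure_union_le _ _
        _ ≤ ENNReal.ofReal ((K : ℝ) * e1) + ENNReal.ofReal ((N : ℝ) * ((K : ℝ) * e2)) :=
            add_le_add hPU1 hPU2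
        _ = ENNReal.ofReal ((K : ℝ) * e1 + (N : ℝ) * ((K : ℝ) * e2)) := by
            rw [ENNReal.ofReal_add] <;> positivity
    have hfinal := ENNReal.toReal_le_of_le_ofReal (by positivity) htotal
    apply le_trans hfinal
    have hNexp : (N : ℝ) = Real.exp L := by
      rw [hLdef, Real.exp_log]
      exact_mod_cast Nat.lt_of_lt_of_le Nat.zero_lt_one hN1
    have hterm1 : (K : ℝ) * e1 = (K : ℝ) * Real.exp (-(φ * ρ / 2) * L + 0 * Real.sqrt L) := by
      rw [he1def]
      norm_num
    have hterm2 : (N : ℝ) * ((K : ℝ) * e2)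
        = (K : ℝ) * Real.exp (-α * L + θ * |x| * Real.sqrt L) := by
      rw [he2def, hNexp, ← mul_assoc, mul_comm (Real.exp L) (K : ℝ), mul_assoc,
        ← Real.exp_add]
      congr 2
      ring
    rw [hterm1, hterm2]

/-- (Lemma: the supremum over `[0, t₁⁽ᴺ⁾)` vanishes).  With
`δ = δ₁/(Λ'(γ)γ) + δ₂` for sufficiently small `δ₁, δ₂ > 0`, `ε = δ^{1/4}` and
`t₁⁽ᴺ⁾ = (1/(Λ'(γ)γ) - ε) log N`, for every `x`,
`P(max_{i ≤ N} sup_{0 ≤ k < t₁⁽ᴺ⁾} ∑_{j=1}^k (S_i(j)-A(j)) > (1/γ) log N + x √(log N)) → 0`. -/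
theorem maxWaitingTime_sup_before_t1
    {Ω : Type*} [MeasureSpace Ω] [IsProbabilityMeasure (ℙ : Measure Ω)]
    (A : ℕ → Ω → ℝ) (S : ℕ → ℕ → Ω → ℝ)
    (hA_meas : ∀ j, Measurable (A j)) (hS_meas : ∀ i j, Measurable (S i j))
    (hA_nonneg : ∀ j ω, 0 ≤ A j ω) (hS_nonneg : ∀ i j ω, 0 ≤ S i j ω)
    (h_indep : iIndepFun
      (fun p : (ℕ × ℕ) ⊕ ℕ => Sum.elim (fun q => S q.1 q.2) A p) ℙ)
    (hA_ident : ∀ j, IdentDistrib (A j) (A 1) ℙ ℙ)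
    (hS_ident : ∀ i j, IdentDistrib (S i j) (S 1 1) ℙ ℙ)
    (lam σA μ : ℝ) (hlam : 0 < lam)
    (hA_int : Integrable (A 1) ℙ)
    (hA_mean : ∫ ω, A 1 ω ∂ℙ = 1 / lam)
    (hA_var : variance (A 1) ℙ = σA ^ 2)
    (hμ : 0 < μ)
    (hSA_int : Integrable (fun ω => S 1 1 ω - A 1 ω) ℙ)
    (hSA_mean : ∫ ω, (S 1 1 ω - A 1 ω) ∂ℙ = -μ)
    (Λ : ℝ → ℝ)
    (hΛ : ∀ θ, Λ θ = Real.log (∫ ω, Real.exp (θ * (S 1 1 ω - 1 / lam)) ∂ℙ))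
    (γ : ℝ) (hγ : 0 < γ) (hΛγ : Λ γ = 0)
    (hγ_int : γ ∈ interior {θ : ℝ |
      Integrable (fun ω => Real.exp (θ * (S 1 1 ω - 1 / lam))) ℙ}) :
    ∃ δ₀ > (0 : ℝ), ∀ δ₁ δ₂ : ℝ, 0 < δ₁ → 0 < δ₂ →
      δ₁ / (deriv Λ γ * γ) + δ₂ < δ₀ →
      ∀ x : ℝ,
        Tendsto (fun N : ℕ =>
            (ℙ {ω : Ω |
              (⨆ i ∈ Finset.Icc 1 N, ⨆ k : ℕ,
                ⨆ _ : (k : ℝ) <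
                  (1 / (deriv Λ γ * γ)
                    - (δ₁ / (deriv Λ γ * γ) + δ₂) ^ ((1 : ℝ) / 4)) * Real.log N,
                ∑ j ∈ Finset.Icc 1 k, (S i j ω - A j ω))
              > (1 / γ) * Real.log N + x * Real.sqrt (Real.log N)}).toReal)
          atTop (𝓝 0) := by
  refine ⟨1, one_pos, ?_⟩
  intro δ₁ δ₂ hδ₁ hδ₂ hδlt x
  by_cases hCpos : 0 < 1 / (deriv Λ γ * γ)
      - (δ₁ / (deriv Λ γ * γ) + δ₂) ^ ((1 : ℝ) / 4)
  swap
  · exact triv_case (fun i k ω => ∑ j ∈ Finset.Icc 1 k, (S i j ω - A j ω)) _ γ x hγ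
      (not_lt.mp hCpos)
  · have hDpos : 0 < deriv Λ γ * γ := by
      by_contra hDle
      push_neg at hDle
      have h1D : 1 / (deriv Λ γ * γ) ≤ 0 := by
        rcases lt_or_eq_of_le hDle with h | h
        · exact le_of_lt (div_neg_of_pos_of_neg one_pos h)
        · rw [h]
          norm_num
      have hεq0 : 0 ≤ (δ₁ / (deriv Λ γ * γ) + δ₂) ^ ((1 : ℝ) / 4) := by
        rcases lt_trichotomy (δ₁ / (deriv Λ γ * γ) + δ₂) 0 with h | h | h
        · rw [Real.rpow_def_of_neg h]
          have hc : Real.cos (1 / 4 * π) > 0 := by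
            rw [show (1:ℝ)/4 * π = π/4 by ring, Real.cos_pi_div_four]
            positivity
          positivity
        · rw [h, Real.zero_rpow (by norm_num)]
      
        · exact (Real.rpow_pos_of_pos h _).le
      linarith
    have hΛ'pos : 0 < deriv Λ γ := by
      rcases lt_trichotomy (deriv Λ γ) 0 with h | h | h
      · exfalso; nlinarith
      · exfalso; rw [h] at hDpos; simp at hDpos
      · exact h
    have hdiff : DifferentiableAt ℝ Λ γ := by
      by_contra hnd
      rw [deriv_zero_of_not_differentiableAt hnd] at hΛ'pos
      exact lt_irrefl 0 hΛ'pos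
    have hClt : 1 / (deriv Λ γ * γ)
        - (δ₁ / (deriv Λ γ * γ) + δ₂) ^ ((1 : ℝ) / 4) < 1 / (deriv Λ γ * γ) := by
      have hδpos : 0 < δ₁ / (deriv Λ γ * γ) + δ₂ := by positivity
      have := Real.rpow_pos_of_pos hδpos ((1 : ℝ) / 4)
      linarith
    exact main_case A S hA_meas hS_meas hA_nonneg h_indep hA_ident hS_ident lam hlam
      hA_int hA_mean Λ hΛ γ hγ hΛγ hγ_int hΛ'pos hdiff _ hCpos hClt x
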